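/- Let w, u, v̄ be nonempty words over alphabet A such that w·u^R·v̄·u is rich, v̄ is the longest palindromic suffix of w·u^R·v̄, every letter of A occurs in w, and for every switch s that is a suffix of w·u^R·v̄·t for some nonempty prefix t of u, the switch palindromic closure of s is a factor of w. Then w·u^R·v̄·u is a unique rich extension of w·u^R·v̄. -/

import Mathlib

def Rich {A : Type*} (w : List A) : Prop :=
  {p : List A | p.reverse = p ∧ p <:+: w}.ncard = w.length + 1
/-- `v` can be extended (to a rich word) in at least two ways. -/
def TwoWays {A : Type*} (v : List A) : Prop :=
  ∃ x y : A, x ≠ y ∧ Rich (v ++ [x]) ∧ Rich (v ++ [y])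
/-- `u` is a unique rich extension of `w`. -/
def UniqueRichExt {A : Type*} (w u : List A) : Prop :=
  Rich u ∧ w <+: u ∧ ∀ v : List A, w <+: v → v <+: u → v ≠ u → ¬ TwoWays v

/-
Appending a letter `y` to a word `v` creates at most one new palindromic factor: a new one must
be a suffix of `v ++ [y]`, and of two palindromic suffixes the shorter is also a prefix of the
longer, hence already occurs in `v`. As `v` has at most `|v| + 1` palindromic factors, `v ++ [y]`
is rich only if it gains exactly one.

Now let `v = w u^R v̄ t` with `t` a proper prefix of `u`, followed in `u` by the letter `a`. If
`v ++ [y]` is rich with `y ≠ a`, its new palindrome is not a single letter, since every letter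
occurs in `w`; so it is `y q y` with `q` a palindrome and `y q` a suffix of `v`. Then `y q a` is a
switch ending `v ++ [a]`, and its closure `y q y` lies in `w`, so it was not new after all.
-/

section Palindromes

open List

variable {A : Type*}

def palindromicFactors (v : List A) : Set (List A) := {p | p.reverse = p ∧ p <:+: v}

theorem palindromicFactors_finite (v : List A) : (palindromicFactors v).Finite :=
  v.sublists.finite_toSet.subset fun _ hp => mem_sublists.mpr hp.2.sublist

theorem eq_of_palindrome_suffix_concat_not_infix {v p m : List A} {y : A}
    (hp : p.reverse = p) (hm : m.reverse = m) (hpv : p <:+ v ++ [y]) (hmv : m <:+ v ++ [y])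
    (hp_new : ¬ p <:+: v) (hlen : p.length ≤ m.length) : p = m := by
  have hpm : p <+: m := by
    rw [← hp, ← hm, reverse_prefix]
    exact suffix_of_suffix_length_le hpv hmv hlen
  obtain rfl | ⟨m', rfl, hm'⟩ := suffix_concat_iff.mp hmv
  · exact absurd (eq_nil_of_prefix_nil hpm ▸ nil_infix) hp_new
  · exact (prefix_concat_iff.mp hpm).resolve_right fun h => hp_new (h.isInfix.trans hm'.isInfix)

theorem subsingleton_palindromicFactors_concat_diff (v : List A) (y : A) :
    (palindromicFactors (v ++ [y]) \ palindromicFactors v).Subsingleton := by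
  have suffix_of_new : ∀ p ∈ palindromicFactors (v ++ [y]) \ palindromicFactors v,
      p <:+ v ++ [y] :=
    fun p ⟨⟨hp, hpf⟩, hpv⟩ =>
      (infix_concat_iff.mp hpf).resolve_right fun h => hpv ⟨hp, h⟩
  intro p hp m hm
  have hp_new : ¬ p <:+: v := fun h => hp.2 ⟨hp.1.1, h⟩
  have hm_new : ¬ m <:+: v := fun h => hm.2 ⟨hm.1.1, h⟩
  rcases le_total p.length m.length with hlen | hlen
  · exact eq_of_palindrome_suffix_concat_not_infix hp.1.1 hm.1.1
      (suffix_of_new p hp) (suffix_of_new m hm) hp_new hlen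
  · exact (eq_of_palindrome_suffix_concat_not_infix hm.1.1 hp.1.1
      (suffix_of_new m hm) (suffix_of_new p hp) hm_new hlen).symm

theorem ncard_palindromicFactors_concat_le (v : List A) (y : A) :
    (palindromicFactors (v ++ [y])).ncard ≤ (palindromicFactors v).ncard + 1 := by
  set new := palindromicFactors (v ++ [y]) \ palindromicFactors v
  have hnew : new.ncard ≤ 1 := by
    have hsub : new.Subsingleton := subsingleton_palindromicFactors_concat_diff v y
    rcases hsub.eq_empty_or_singleton with h | ⟨m, h⟩ <;> simp [h]
  calc (palindromicFactors (v ++ [y])).ncard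
      ≤ (palindromicFactors v ∪ new).ncard :=
        Set.ncard_le_ncard (by simp [new])
          ((palindromicFactors_finite v).union (palindromicFactors_finite _).sdiff)
    _ ≤ (palindromicFactors v).ncard + 1 := (Set.ncard_union_le _ _).trans (by omega)

theorem ncard_palindromicFactors_le (v : List A) :
    (palindromicFactors v).ncard ≤ v.length + 1 := by
  induction v using reverseRecOn with
  | nil =>
    have : palindromicFactors ([] : List A) = {[]} := by
      ext p
      simp +contextual [palindromicFactors]
    simp [this]
  | append_singleton v y ih =>
    simpa using (ncard_palindromicFactors_concat_le v y).trans (by omega)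

theorem Rich.exists_palindrome_suffix_not_infix {v : List A} {y : A} (h : Rich (v ++ [y])) :
    ∃ m : List A, m.reverse = m ∧ m <:+ v ++ [y] ∧ ¬ m <:+: v := by
  by_contra! hall
  have hsub : palindromicFactors (v ++ [y]) ⊆ palindromicFactors v := fun p ⟨hp, hpf⟩ =>
    ⟨hp, (infix_concat_iff.mp hpf).elim (hall p hp) id⟩
  have hle := (Set.ncard_le_ncard hsub (palindromicFactors_finite v)).trans
    (ncard_palindromicFactors_le v)
  have hrich : (palindromicFactors (v ++ [y])).ncard = v.length + 2 :=
    (show (palindromicFactors (v ++ [y])).ncard = (v ++ [y]).length + 1 from h).trans (by simp)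
  omega

theorem Rich.eq_of_switch_closure_infix {v : List A} {a y : A} (hrich : Rich (v ++ [y]))
    (hletters : ∀ b, b ∈ v)
    (hclosure : ∀ (x : A) (q : List A), x ≠ a → q.reverse = q →
      x :: (q ++ [a]) <:+ v ++ [a] → x :: (q ++ [x]) <:+: v) : y = a := by
  by_contra hya
  obtain ⟨m, hm, hmv, hm_new⟩ := hrich.exists_palindrome_suffix_not_infix
  obtain rfl | ⟨m', rfl, hm'⟩ := suffix_concat_iff.mp hmv
  · exact hm_new nil_infix
  rcases m' with _ | ⟨c, q⟩
  · exact hm_new ((singleton_infix_iff y v).mpr (hletters y))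
  obtain ⟨rfl, hq, -⟩ : y = c ∧ q.reverse = q ∧ c = y := by simpa using hm
  have hswitch : y :: (q ++ [a]) <:+ v ++ [a] := by
    obtain ⟨s, hs⟩ := hm'
    exact ⟨s, by simp [← hs]⟩
  exact hm_new (by simpa using hclosure y q hya hq hswitch)

end Palindromes

theorem stmt15_general {A : Type*} (w u vb : List A)
    (hrich : Rich (w ++ u.reverse ++ vb ++ u))
    (hletters : ∀ a : A, a ∈ w)
    (hswc : ∀ (x y : A) (p : List A), x ≠ y → p.reverse = p →
      (∃ t : List A, t <+: u ∧ t ≠ [] ∧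
        (x :: (p ++ [y])) <:+ (w ++ u.reverse ++ vb ++ t)) →
      (x :: (p ++ [x])) <:+: w) :
    UniqueRichExt (w ++ u.reverse ++ vb) (w ++ u.reverse ++ vb ++ u) := by
  set W := w ++ u.reverse ++ vb
  have hwW : w <+: W := (List.prefix_append w u.reverse).trans (List.prefix_append _ vb)
  refine ⟨hrich, List.prefix_append W u, ?_⟩
  rintro _ ⟨t, rfl⟩ htu hne ⟨x, y, hxy, hx, hy⟩
  obtain ⟨s, hs⟩ := (List.prefix_append_right_inj W).mp htu
  obtain ⟨a, r, rfl⟩ : ∃ a r, s = a :: r :=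
    s.exists_cons_of_ne_nil fun h => hne (by simp [← hs, h])
  have hwv : w <:+: W ++ t := (hwW.trans (List.prefix_append W t)).isInfix
  have unique_letter : ∀ z, Rich (W ++ t ++ [z]) → z = a := fun z hz =>
    hz.eq_of_switch_closure_infix (fun b => hwv.subset (hletters b)) fun x' q hx' hq hsw =>
      (hswc x' a q hx' hq ⟨t ++ [a], ⟨r, by simp [← hs]⟩, by simp, by simpa using hsw⟩).trans
        hwv
  exact hxy ((unique_letter x hx).trans (unique_letter y hy).symm)

theorem stmt15 {A : Type*} (w u vb : List A)
    (hwne : w ≠ []) (hune : u ≠ []) (hvbne : vb ≠ [])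
    (hrich : Rich (w ++ u.reverse ++ vb ++ u))
    (hpal : vb.reverse = vb) (hsuf : vb <:+ (w ++ u.reverse ++ vb))
    (hlps : ∀ q : List A, q.reverse = q → q <:+ (w ++ u.reverse ++ vb) →
      q.length ≤ vb.length)
    (hletters : ∀ a : A, a ∈ w)
    (hswc : ∀ (x y : A) (p : List A), x ≠ y → p.reverse = p →
      (∃ t : List A, t <+: u ∧ t ≠ [] ∧
        (x :: (p ++ [y])) <:+ (w ++ u.reverse ++ vb ++ t)) →
      (x :: (p ++ [x])) <:+: w) :
    UniqueRichExt (w ++ u.reverse ++ vb) (w ++ u.reverse ++ vb ++ u) :=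
  stmt15_general w u vb hrich hletters hswc
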